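/- Let q be an odd prime power, let d ≤ n and t ≥ 1 be integers, let f : F_q^d → [−1/2, 1/2] be a function, and let α = (α_1,…,α_t) ∈ (F_q^×)^t. Then for every r ∈ F_q^n, the Fourier coefficient of G_n^α[f] at r satisfies |\widehat{G_n^α[f]}(r)| ≤ q^{d − n/2}. -/

import Mathlib

open Finset

/-- The standard dot product on `F^n`. -/
def dotp {F : Type} [Field F] {n : ℕ} (x y : Fin n → F) : F := ∑ i, x i * y i

/-- The additive character `t ↦ ω^t` of `ZMod p`, where `ω = exp(2πi/p)`. -/
noncomputable def chi (p : ℕ) (t : ZMod p) : ℂ :=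
  Complex.exp (2 * Real.pi * Complex.I * (t.val : ℂ) / (p : ℂ))

/-- The trace map from a field of characteristic `p` to `F_p = ZMod p`. -/
noncomputable def trp (p : ℕ) (F : Type) [Field F] [Algebra (ZMod p) F] (x : F) : ZMod p :=
  Algebra.trace (ZMod p) F x

/-- The operator `G_n^α[f]`:
`G_n^α[f](x) = (1/(2t)) f†(x) Σ_j (ω^{Tr(α_j (x·x))} + ω^{−Tr(α_j (x·x))})`,
where `f†(x₁,…,xₙ) = f(x₁,…,x_d)`. -/
noncomputable def Gop (p : ℕ) (F : Type) [Field F] [Fintype F] [Algebra (ZMod p) F]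
    {d n t : ℕ} (hdn : d ≤ n) (α : Fin t → F) (f : (Fin d → F) → ℝ) :
    (Fin n → F) → ℂ := fun x =>
  (1 / (2 * t) : ℂ) * ((f fun i => x (Fin.castLE hdn i) : ℝ) : ℂ) *
    ∑ j, (chi p (trp p F (α j * dotp x x)) + chi p (-(trp p F (α j * dotp x x))))

/-- The Fourier coefficient `ĝ(r) = E_{x ∈ F_q^n} g(x) ω^{−Tr(r·x)}`. -/
noncomputable def fourierCoeffAt (p : ℕ) (F : Type) [Field F] [Fintype F] [Algebra (ZMod p) F]
    {n : ℕ} (g : (Fin n → F) → ℂ) (r : Fin n → F) : ℂ :=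
  (∑ x : Fin n → F, g x * chi p (-(trp p F (dotp r x)))) / ((Fintype.card F : ℂ) ^ n)

set_option linter.unusedSectionVars false

section AuxG
variable (p : ℕ) [Fact p.Prime] (F : Type) [Field F] [Fintype F] [Algebra (ZMod p) F]


noncomputable def zp : ℂ := Complex.exp (2 * Real.pi * Complex.I / p)
lemma zp_prim : IsPrimitiveRoot (zp p) p :=
  Complex.isPrimitiveRoot_exp p (Fact.out : p.Prime).ne_zero
lemma zp_pow : zp p ^ p = 1 := (zp_prim p).pow_eq_one
noncomputable def Psi : AddChar F ℂ :=
  (AddChar.zmodChar p (zp_pow p)).compAddMonoidHom (Algebra.trace (ZMod p) F).toAddMonoidHom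
lemma Psi_def (x : F) : Psi p F x = zp p ^ (Algebra.trace (ZMod p) F x).val := rfl
lemma abs_zp : ‖zp p‖ = 1 := by
  have : zp p = Complex.exp (((2*Real.pi/p : ℝ) : ℂ) * Complex.I) := by
    unfold zp; congr 1; push_cast; ring
  rw [this, Complex.norm_exp_ofReal_mul_I]
lemma abs_Psi (x : F) : ‖Psi p F x‖ = 1 := by
  rw [Psi_def, norm_pow, abs_zp, one_pow]
lemma Psi_conj (x : F) : (starRingEnd ℂ) (Psi p F x) = Psi p F (-x) := by
  have h1 : Psi p F x * Psi p F (-x) = 1 := by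
    rw [← AddChar.map_add_eq_mul]; simp
  have h2 : ‖Psi p F x‖ = 1 := by rw [abs_Psi]
  rw [← RCLike.inv_eq_conj h2]
  exact inv_eq_of_mul_eq_one_right h1
lemma Psi_chi (x : F) : chi p (trp p F x) = Psi p F x := by
  rw [Psi_def]; unfold chi trp zp
  rw [← Complex.exp_nat_mul]; congr 1; ring
lemma Psi_chi_neg (x : F) : chi p (-(trp p F x)) = Psi p F (-x) := by
  have : -(trp p F x) = trp p F (-x) := by unfold trp; rw [map_neg]
  rw [this, Psi_chi]
lemma trace_nondeg {a : F} (ha : a ≠ 0) : ∃ b : F, Algebra.trace (ZMod p) F (a * b) ≠ 0 := by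
  haveI h1 : CharP F p := charP_of_injective_ringHom (algebraMap (ZMod p) F).injective p
  have hch : ringChar F = p := ringChar.eq F p
  subst hch
  exact FiniteField.trace_to_zmod_nondegenerate F ha
lemma Psi_sum_shift {c : F} (hc : c ≠ 0) : ∑ w : F, Psi p F (c * w) = 0 := by
  have hne : AddChar.mulShift (Psi p F) c ≠ 1 := by
    obtain ⟨b, hb⟩ := trace_nondeg p F hc
    intro h
    have h2 : Psi p F (c * b) = 1 := by
      have := congrArg (fun ψ : AddChar F ℂ => ψ b) h
      simpa [AddChar.mulShift_apply] using this
    have hprim := AddChar.zmodChar_primitive_of_primitive_root p (zp_prim p)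
    exact hb ((hprim.zmod_char_eq_one_iff p (Algebra.trace (ZMod p) F (c*b))).mp h2)
  have := AddChar.sum_eq_zero_of_ne_one hne
  simpa [AddChar.mulShift_apply] using this

lemma two_ne_zeroF (hp : Odd p) : (2 : F) ≠ 0 := by
  haveI h1 : CharP F p := charP_of_injective_ringHom (algebraMap (ZMod p) F).injective p
  have : ((2 : ℕ) : F) ≠ 0 := by
    rw [Ne, CharP.cast_eq_zero_iff F p]
    intro h
    rcases (Nat.prime_dvd_prime_iff_eq (Fact.out : p.Prime) Nat.prime_two).mp h with rfl
    exact (Nat.not_odd_iff_even.mpr (even_iff_two_dvd.mpr ⟨1, rfl⟩)) hp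
  simpa using this

lemma gauss_sq (hp : Odd p) {a : F} (b : F) (ha : a ≠ 0) :
    (∑ z : F, Psi p F (a*z^2 + b*z)) * (starRingEnd ℂ) (∑ z : F, Psi p F (a*z^2 + b*z))
      = (Fintype.card F : ℂ) := by
  rw [map_sum]
  simp_rw [Psi_conj, Finset.sum_mul_sum]
  -- ∑ z ∑ w, Psi (a z² + b z) * Psi (-(a w² + b w))
  simp_rw [← AddChar.map_add_eq_mul]
  rw [Finset.sum_comm]
  -- reindex z = w + h
  have hre : ∀ w : F, ∑ z : F, Psi p F (a*z^2 + b*z + -(a*w^2 + b*w))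
      = ∑ h : F, Psi p F ((a*h^2 + b*h) + (2*a*h)*w) := by
    intro w
    rw [← Equiv.sum_comp (Equiv.addLeft w) (fun z => Psi p F (a*z^2 + b*z + -(a*w^2 + b*w)))]
    apply Finset.sum_congr rfl
    intro h _
    congr 1
    simp only [Equiv.coe_addLeft]
    ring
  simp_rw [hre]
  rw [Finset.sum_comm]
  classical
  have hsum : ∀ h : F, (∑ w : F, Psi p F ((a*h^2+b*h) + (2*a*h)*w))
      = Psi p F (a*h^2+b*h) * ∑ w : F, Psi p F ((2*a*h)*w) := by
    intro h
    rw [Finset.mul_sum]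
    exact Finset.sum_congr rfl fun w _ => AddChar.map_add_eq_mul _ _ _
  simp_rw [hsum]
  rw [Fintype.sum_eq_single (0:F) (fun h hh0 => by
    have h2 : (2*a*h) ≠ 0 := mul_ne_zero (mul_ne_zero (two_ne_zeroF p F hp) ha) hh0
    rw [Psi_sum_shift p F h2, mul_zero])]
  simp [Finset.card_univ]

lemma gauss_abs (hp : Odd p) {a : F} (b : F) (ha : a ≠ 0) :
    ‖∑ z : F, Psi p F (a*z^2 + b*z)‖ = Real.sqrt (Fintype.card F) := by
  set S := ∑ z : F, Psi p F (a*z^2 + b*z) with hS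
  have h := gauss_sq p F hp b ha
  rw [← hS, Complex.mul_conj] at h
  have h2 : Complex.normSq S = (Fintype.card F : ℝ) := by exact_mod_cast h
  rw [← Real.sqrt_sq (norm_nonneg S), Complex.sq_norm, h2]

lemma Psi_sum {ι : Type} (s : Finset ι) (g : ι → F) :
    Psi p F (∑ i ∈ s, g i) = ∏ i ∈ s, Psi p F (g i) := by
  classical
  induction s using Finset.cons_induction with
  | empty => simp
  | cons i s hi ih => rw [Finset.sum_cons, Finset.prod_cons, AddChar.map_add_eq_mul, ih]

lemma gauss_multi (hp : Odd p) (m : ℕ) {a : F} (ha : a ≠ 0) (b : Fin m → F) :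
    ‖∑ z : Fin m → F, Psi p F (a * dotp z z + dotp b z)‖
      = Real.sqrt (Fintype.card F) ^ m := by
  have h1 : ∀ z : Fin m → F, a * dotp z z + dotp b z = ∑ i, (a * (z i)^2 + b i * z i) := by
    intro z
    unfold dotp
    rw [Finset.mul_sum, ← Finset.sum_add_distrib]
    exact Finset.sum_congr rfl fun i _ => by ring
  simp_rw [h1, Psi_sum]
  rw [← Fintype.prod_sum (fun (i : Fin m) (c : F) => Psi p F (a*c^2 + b i * c))]
  rw [norm_prod]
  rw [Finset.prod_congr rfl (fun i _ => gauss_abs p F hp (b i) ha)]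
  simp

lemma key (hp : Odd p) {d n : ℕ} (hdn : d ≤ n) (f : (Fin d → F) → ℝ)
    (hf : ∀ y, |f y| ≤ 1/2) (r : Fin n → F) {a : F} (ha : a ≠ 0) :
    ‖∑ x : Fin n → F, ((f fun i => x (Fin.castLE hdn i) : ℝ) : ℂ)
        * Psi p F (a * dotp x x - dotp r x)‖
      ≤ ((Fintype.card F : ℝ)^d / 2) * Real.sqrt (Fintype.card F) ^ (n - d) := by
  set m := n - d with hmdef
  have hm : d + m = n := Nat.add_sub_cancel' hdn
  set e : Fin n ≃ (Fin d ⊕ Fin m) := (finCongr hm.symm).trans finSumFinEquiv.symm with he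
  set E : (Fin n → F) ≃ ((Fin d → F) × (Fin m → F)) :=
    (Equiv.arrowCongr e (Equiv.refl F)).trans (Equiv.sumArrowEquivProdArrow _ _ _) with hE
  have hEsymm : ∀ (y : Fin d → F) (z : Fin m → F) (j : Fin n),
      E.symm (y, z) j = Sum.elim y z (e j) := by
    intro y z j
    simp [hE, Equiv.sumArrowEquivProdArrow, Equiv.arrowCongr]
  set r1 : Fin d → F := fun i => r (e.symm (Sum.inl i)) with hr1
  set b : Fin m → F := fun i => -(r (e.symm (Sum.inr i))) with hb
  have hterm : ∀ (y : Fin d → F) (z : Fin m → F),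
      ((f fun i => (E.symm (y,z)) (Fin.castLE hdn i) : ℝ) : ℂ)
          * Psi p F (a * dotp (E.symm (y,z)) (E.symm (y,z)) - dotp r (E.symm (y,z)))
      = (((f y : ℝ) : ℂ) * Psi p F (a * dotp y y - dotp r1 y))
        * Psi p F (a * dotp z z + dotp b z) := by
    intro y z
    have hx : ∀ j, E.symm (y,z) j = Sum.elim y z (e j) := hEsymm y z
    have hxsymm : ∀ s, E.symm (y,z) (e.symm s) = Sum.elim y z s := by
      intro s; rw [hx]; simp
    have hfy : (fun i => E.symm (y,z) (Fin.castLE hdn i)) = y := by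
      funext i
      rw [hx]
      have h2 : e (Fin.castLE hdn i) = Sum.inl i := by
        rw [he]
        simp only [Equiv.trans_apply]
        have h3 : finCongr hm.symm (Fin.castLE hdn i) = Fin.castAdd m i := by
          apply Fin.ext; simp
        rw [h3, finSumFinEquiv_symm_apply_castAdd]
      rw [h2]; rfl
    have hdot1 : dotp (E.symm (y,z)) (E.symm (y,z)) = dotp y y + dotp z z := by
      unfold dotp
      rw [← Equiv.sum_comp e.symm (fun j => E.symm (y,z) j * E.symm (y,z) j)]
      rw [Fintype.sum_sum_type]
      congr 1
      · exact Finset.sum_congr rfl fun i _ => by rw [hxsymm]; rfl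
      · exact Finset.sum_congr rfl fun i _ => by rw [hxsymm]; rfl
    have hdot2 : dotp r (E.symm (y,z)) = dotp r1 y + (- dotp b z) := by
      unfold dotp
      rw [← Equiv.sum_comp e.symm (fun j => r j * E.symm (y,z) j)]
      rw [Fintype.sum_sum_type, ← Finset.sum_neg_distrib]
      congr 1
      · exact Finset.sum_congr rfl fun i _ => by rw [hxsymm, hr1]; rfl
      · exact Finset.sum_congr rfl fun i _ => by rw [hxsymm, hb]; simp
    rw [hfy, hdot1, hdot2, mul_assoc, ← AddChar.map_add_eq_mul]
    congr 1
    ring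
  rw [← Equiv.sum_comp E.symm (fun x => ((f fun i => x (Fin.castLE hdn i) : ℝ) : ℂ)
        * Psi p F (a * dotp x x - dotp r x)), Fintype.sum_prod_type]
  simp_rw [hterm]
  simp_rw [← Finset.mul_sum]
  rw [← Finset.sum_mul]
  rw [norm_mul]
  have h1 : ‖∑ y : Fin d → F, ((f y : ℝ) : ℂ) * Psi p F (a * dotp y y - dotp r1 y)‖
      ≤ (Fintype.card F : ℝ)^d / 2 := by
    calc ‖∑ y : Fin d → F, ((f y : ℝ) : ℂ) * Psi p F (a * dotp y y - dotp r1 y)‖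
        ≤ ∑ y : Fin d → F, ‖((f y : ℝ) : ℂ) * Psi p F (a * dotp y y - dotp r1 y)‖ :=
          norm_sum_le _ _
      _ ≤ ∑ _y : Fin d → F, (1/2 : ℝ) := by
          apply Finset.sum_le_sum
          intro y _
          rw [norm_mul, abs_Psi, mul_one, Complex.norm_real, Real.norm_eq_abs]
          exact hf y
      _ = (Fintype.card F : ℝ)^d / 2 := by
          rw [Finset.sum_const, Finset.card_univ]
          simp [Fintype.card_fun]
          ring
  have h2 : ‖∑ z : Fin m → F, Psi p F (a * dotp z z + dotp b z)‖
      = Real.sqrt (Fintype.card F) ^ m := gauss_multi p F hp m ha b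
  rw [h2]
  apply mul_le_mul_of_nonneg_right h1 (by positivity)

end AuxG

/-- over an odd prime power field, all Fourier coefficients of
`G_n^α[f]` are bounded by `q^{d − n/2}`. -/
theorem fourierCoeff_Gop_le (p : ℕ) [Fact p.Prime] (hp : Odd p)
    (F : Type) [Field F] [Fintype F] [Algebra (ZMod p) F]
    {d n t : ℕ} (hdn : d ≤ n) (ht : 1 ≤ t)
    (f : (Fin d → F) → ℝ) (hf : ∀ y, f y ∈ Set.Icc (-(1 / 2) : ℝ) (1 / 2))
    (α : Fin t → F) (hα : ∀ j, α j ≠ 0) (r : Fin n → F) :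
    ‖fourierCoeffAt p F (Gop p F hdn α f) r‖ ≤
      (Fintype.card F : ℝ) ^ ((d : ℝ) - (n : ℝ) / 2) := by
  have hf' : ∀ y, |f y| ≤ 1/2 := by
    intro y
    rcases hf y with ⟨h1, h2⟩
    rw [abs_le]; constructor <;> linarith
  set q : ℝ := (Fintype.card F : ℝ) with hq
  have hq1 : (1:ℝ) ≤ q := by
    rw [hq]; exact_mod_cast Fintype.card_pos
  have hq0 : (0:ℝ) < q := lt_of_lt_of_le one_pos hq1
  -- the numerator
  set S : F → ℂ := fun a => ∑ x : Fin n → F, ((f fun i => x (Fin.castLE hdn i) : ℝ) : ℂ)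
      * Psi p F (a * dotp x x - dotp r x) with hS
  have hT : (∑ x : Fin n → F, Gop p F hdn α f x * chi p (-(trp p F (dotp r x))))
      = (1 / (2 * t) : ℂ) * ∑ j, (S (α j) + S (-(α j))) := by
    unfold Gop
    have hterm : ∀ x : Fin n → F,
        ((1 / (2 * t) : ℂ) * ((f fun i => x (Fin.castLE hdn i) : ℝ) : ℂ) *
          ∑ j, (chi p (trp p F (α j * dotp x x)) + chi p (-(trp p F (α j * dotp x x))))) *
          chi p (-(trp p F (dotp r x)))
        = (1 / (2 * t) : ℂ) * ∑ j,
            (((f fun i => x (Fin.castLE hdn i) : ℝ) : ℂ) * Psi p F (α j * dotp x x - dotp r x)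
             + ((f fun i => x (Fin.castLE hdn i) : ℝ) : ℂ) * Psi p F ((-(α j)) * dotp x x - dotp r x)) := by
      intro x
      simp_rw [Psi_chi, Psi_chi_neg, Finset.mul_sum, Finset.sum_mul]
      apply Finset.sum_congr rfl
      intro j _
      have e1 : Psi p F (α j * dotp x x) * Psi p F (-(dotp r x))
          = Psi p F (α j * dotp x x - dotp r x) := by
        rw [← AddChar.map_add_eq_mul]; congr 1; ring
      have e2 : Psi p F (-(α j * dotp x x)) * Psi p F (-(dotp r x))
          = Psi p F ((-(α j)) * dotp x x - dotp r x) := by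
        rw [← AddChar.map_add_eq_mul]; congr 1; ring
      calc (1 / (2 * t) : ℂ) * ((f fun i => x (Fin.castLE hdn i) : ℝ) : ℂ) *
            (Psi p F (α j * dotp x x) + Psi p F (-(α j * dotp x x))) *
            Psi p F (-(dotp r x))
          = (1 / (2 * t) : ℂ) *
            (((f fun i => x (Fin.castLE hdn i) : ℝ) : ℂ) *
              (Psi p F (α j * dotp x x) * Psi p F (-(dotp r x)))
             + ((f fun i => x (Fin.castLE hdn i) : ℝ) : ℂ) *
              (Psi p F (-(α j * dotp x x)) * Psi p F (-(dotp r x)))) := by ring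
        _ = _ := by rw [e1, e2]
    simp_rw [hterm]
    rw [← Finset.mul_sum, Finset.sum_comm]
    congr 1
    apply Finset.sum_congr rfl
    intro j _
    rw [Finset.sum_add_distrib, hS]
  unfold fourierCoeffAt
  rw [hT, norm_div, norm_mul]
  have habs2t : ‖(1 / (2 * t) : ℂ)‖ = 1 / (2 * t) := by
    rw [norm_div, norm_one, norm_mul]
    simp [Complex.norm_natCast]
  have habsden : ‖(Fintype.card F : ℂ) ^ n‖ = q ^ n := by
    rw [norm_pow, Complex.norm_natCast]
  rw [habs2t, habsden]
  set K : ℝ := (q^d / 2) * Real.sqrt (Fintype.card F) ^ (n - d) with hK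
  have hK0 : 0 ≤ K := by positivity
  have hsum : ‖∑ j, (S (α j) + S (-(α j)))‖ ≤ (t : ℝ) * (2 * K) := by
    calc ‖∑ j, (S (α j) + S (-(α j)))‖
        ≤ ∑ j, ‖S (α j) + S (-(α j))‖ := norm_sum_le _ _
      _ ≤ ∑ _j : Fin t, (2 * K) := by
          apply Finset.sum_le_sum
          intro j _
          calc ‖S (α j) + S (-(α j))‖
              ≤ ‖S (α j)‖ + ‖S (-(α j))‖ := norm_add_le _ _
            _ ≤ K + K := by
                apply add_le_add
                · exact key p F hp hdn f hf' r (hα j)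
                · exact key p F hp hdn f hf' r (neg_ne_zero.mpr (hα j))
            _ = 2 * K := by ring
      _ = (t : ℝ) * (2 * K) := by rw [Finset.sum_const, Finset.card_univ, Fintype.card_fin,
            nsmul_eq_mul]
  have ht0 : (0:ℝ) < t := by exact_mod_cast ht
  have hfinal : 1 / (2 * (t:ℝ)) * ‖∑ j, (S (α j) + S (-(α j)))‖ / q ^ n
      ≤ K / q ^ n := by
    apply div_le_div_of_nonneg_right ?_ (by positivity)
    calc 1 / (2 * (t:ℝ)) * ‖∑ j, (S (α j) + S (-(α j)))‖
        ≤ 1 / (2 * (t:ℝ)) * ((t : ℝ) * (2 * K)) := by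
          apply mul_le_mul_of_nonneg_left hsum (by positivity)
      _ = K := by field_simp
  refine le_trans hfinal ?_
  -- now: K / q^n ≤ q ^ ((d:ℝ) - n/2)
  have hsqrt : Real.sqrt (Fintype.card F) ^ (n - d) = q ^ (((n:ℝ) - (d:ℝ))/2) := by
    rw [← hq, Real.sqrt_eq_rpow, ← Real.rpow_natCast (q ^ ((1:ℝ)/2)) (n-d),
      ← Real.rpow_mul (le_of_lt hq0)]
    congr 1
    rw [Nat.cast_sub hdn]
    ring
  have hqd : q ^ d = q ^ ((d:ℝ)) := by rw [← Real.rpow_natCast]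
  have hqn : q ^ n = q ^ ((n:ℝ)) := by rw [← Real.rpow_natCast]
  rw [hK, hsqrt, hqd, hqn]
  have heq : q ^ ((d:ℝ)) / 2 * q ^ (((n:ℝ) - (d:ℝ))/2) / q ^ ((n:ℝ))
      = (1/2) * q ^ (((d:ℝ) - (n:ℝ))/2) := by
    rw [div_mul_eq_mul_div, mul_comm, ← Real.rpow_add hq0, div_div, mul_comm (2:ℝ),
      ← div_div, ← Real.rpow_sub hq0]
    congr 2
    ring
  rw [heq]
  calc (1/2 : ℝ) * q ^ (((d:ℝ) - (n:ℝ))/2)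
      ≤ 1 * q ^ (((d:ℝ) - (n:ℝ))/2) := by
        apply mul_le_mul_of_nonneg_right (by norm_num) (le_of_lt (Real.rpow_pos_of_pos hq0 _))
    _ = q ^ (((d:ℝ) - (n:ℝ))/2) := one_mul _
    _ ≤ q ^ ((d:ℝ) - (n:ℝ)/2) := by
        apply Real.rpow_le_rpow_of_exponent_le hq1
        have : (0:ℝ) ≤ (d:ℝ) := Nat.cast_nonneg d
        linarith
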